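/- arXiv:2205.00102 — 8 statements merged into one kernel-verified Lean document; each statement's English description precedes it below -/
import Mathlib

section
/- Let p > 1 be a real number, let d' ≥ 2, let e_1,…,e_{d'} be the standard basis vectors of ℝ^{d'}, let c = 1/(1 + (d'−1)^{1/(p−1)}), and let r = ((d'−1)c^p + (1−c)^p)^{1/p}. Then: (i) ||e_i − c·(1,…,1)||_p = r for every i ∈ {1,…,d'}; and (ii) for every x ∈ ℝ^{d'}, max_{1 ≤ i ≤ d'} ||e_i − x||_p ≥ r. In other words, the smallest l_p ball enclosing {e_1,…,e_{d'}} is centered at c·∑_{i=1}^{d'} e_i and has radius r. -/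
open Finset

/-!
Write `D = d' - 1`. Summing `‖e_i - x‖_p^p` over `i` gives `∑_j (|1 - x_j|^p + D |x_j|^p)`,
so some `i` has `‖e_i - x‖_p^p` at least the minimum of `f t = |1 - t|^p + D |t|^p`. The value
of `c` is exactly the critical-point condition `(1 - c)^(p-1) = D c^(p-1)`; adding the tangent-line
inequalities of the convex map `s ↦ s^p` at `1 - c` and at `c`, and using `|1 - t| + |t| ≥ 1`,
gives `f t ≥ f c = r^p`.
-/

theorem rpow_add_mul_rpow_sub_one_mul_sub_le_rpow {p a b : ℝ} (hp : 1 ≤ p) (hb : 0 < b)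
    (ha : 0 ≤ a) : b ^ p + p * b ^ (p - 1) * (a - b) ≤ a ^ p := by
  have hbern := one_add_mul_self_le_rpow_one_add
    (by linarith [div_nonneg ha hb.le] : -1 ≤ a / b - 1) hp
  rw [add_sub_cancel, Real.div_rpow ha hb.le, le_div_iff₀ (Real.rpow_pos_of_pos hb p)] at hbern
  calc b ^ p + p * b ^ (p - 1) * (a - b) = (1 + p * (a / b - 1)) * b ^ p := by
        rw [Real.rpow_sub hb, Real.rpow_one]; field_simp
    _ ≤ a ^ p := hbern

theorem le_abs_one_sub_rpow_add_mul_abs_rpow {p c D : ℝ} (hp : 1 ≤ p) (hc₀ : 0 < c)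
    (hc₁ : c < 1) (hD : 0 ≤ D) (hcrit : (1 - c) ^ (p - 1) = D * c ^ (p - 1)) (t : ℝ) :
    D * c ^ p + (1 - c) ^ p ≤ |1 - t| ^ p + D * |t| ^ p := by
  have h₁ := rpow_add_mul_rpow_sub_one_mul_sub_le_rpow hp (sub_pos.2 hc₁) (abs_nonneg (1 - t))
  have h₂ := mul_le_mul_of_nonneg_left
    (rpow_add_mul_rpow_sub_one_mul_sub_le_rpow hp hc₀ (abs_nonneg t)) hD
  have htri : 1 ≤ |1 - t| + |t| := by simpa using abs_add_le (1 - t) t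
  have hslope : 0 ≤ p * (D * c ^ (p - 1)) := by positivity
  rw [hcrit] at h₁
  nlinarith [mul_le_mul_of_nonneg_left htri hslope]

theorem one_sub_rpow_eq_mul_rpow {q D c : ℝ} (hq : 0 < q) (hD : 0 ≤ D)
    (hc : c * (1 + D ^ (1 / q)) = 1) : (1 - c) ^ q = D * c ^ q := by
  have hc₀ : 0 ≤ c := by nlinarith [Real.rpow_nonneg hD (1 / q)]
  rw [show 1 - c = c * D ^ (1 / q) by linarith, Real.mul_rpow hc₀ (Real.rpow_nonneg hD _),
    ← Real.rpow_mul hD, one_div_mul_cancel hq.ne', Real.rpow_one, mul_comm]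

variable {ι : Type*} [Fintype ι] [DecidableEq ι]

theorem sum_ite_eq_add_card_sub_one_mul (k : ι) (A B : ℝ) :
    ∑ j, (if j = k then A else B) = A + (Fintype.card ι - 1) * B := by
  rw [← add_sum_erase _ _ (mem_univ k), if_pos rfl,
    sum_congr rfl fun j hj => if_neg (ne_of_mem_erase hj), sum_const,
    card_erase_of_mem (mem_univ k), nsmul_eq_mul, card_univ,
    Nat.cast_pred (Fintype.card_pos_iff.2 ⟨k⟩)]

theorem sum_sum_apply_ite_sub (φ : ℝ → ℝ) (x : ι → ℝ) :
    ∑ i, ∑ j, φ ((if j = i then 1 else 0) - x j) =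
      ∑ j, (φ (1 - x j) + (Fintype.card ι - 1) * φ (-x j)) := by
  rw [sum_comm]
  refine sum_congr rfl fun j _ => ?_
  simp_rw [eq_comm (a := j), apply_ite (· - x j), apply_ite φ, zero_sub]
  exact sum_ite_eq_add_card_sub_one_mul j _ _

/-- The smallest `l_p` ball enclosing the standard basis vectors `e_1, …, e_{d'}` of
`ℝ^{d'}` is centered at `c • (1,…,1)` with `c = 1/(1 + (d'-1)^(1/(p-1)))` and has radius
`r = ((d'-1) c^p + (1-c)^p)^(1/p)`:
(i) every `e_i` is at `l_p` distance exactly `r` from the center, and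
(ii) for every `x ∈ ℝ^{d'}`, the maximum over `i` of `‖e_i - x‖_p` is at least `r`
(i.e. some `i` has `‖e_i - x‖_p ≥ r`). -/
theorem stmt_3 (p : ℝ) (hp : 1 < p) (d' : ℕ) (hd' : 2 ≤ d') :
    let c : ℝ := 1 / (1 + ((d' : ℝ) - 1) ^ ((1 : ℝ) / (p - 1)))
    let r : ℝ := (((d' : ℝ) - 1) * c ^ p + (1 - c) ^ p) ^ ((1 : ℝ) / p)
    (∀ i : Fin d',
      (∑ j : Fin d', |(if j = i then (1 : ℝ) else 0) - c| ^ p) ^ ((1 : ℝ) / p) = r) ∧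
    ∀ x : Fin d' → ℝ, ∃ i : Fin d',
      r ≤ (∑ j : Fin d', |(if j = i then (1 : ℝ) else 0) - x j| ^ p) ^ ((1 : ℝ) / p) := by
  intro c r
  set D : ℝ := (d' : ℝ) - 1
  have hD : 0 < D := by
    have : (2 : ℝ) ≤ d' := by exact_mod_cast hd'
    linarith
  have hE : 0 < D ^ (1 / (p - 1)) := Real.rpow_pos_of_pos hD _
  have hc₀ : 0 < c := by positivity
  have hc₁ : c < 1 := (div_lt_one (by linarith)).2 (by linarith)
  have hcrit : (1 - c) ^ (p - 1) = D * c ^ (p - 1) :=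
    one_sub_rpow_eq_mul_rpow (by linarith) hD.le (one_div_mul_cancel (by positivity))
  have hcard : (Fintype.card (Fin d') : ℝ) - 1 = D := by simp [D]
  refine ⟨fun i => ?_, fun x => ?_⟩
  · simp_rw [apply_ite (· - c), apply_ite (|·| ^ p), sum_ite_eq_add_card_sub_one_mul i, hcard,
      zero_sub, abs_neg, abs_of_pos hc₀, abs_of_pos (sub_pos.2 hc₁)]
    rw [add_comm]
  · have hlower : ∑ _i : Fin d', (D * c ^ p + (1 - c) ^ p) ≤
        ∑ i : Fin d', ∑ j : Fin d', |(if j = i then (1 : ℝ) else 0) - x j| ^ p := by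
      rw [sum_sum_apply_ite_sub (|·| ^ p), hcard]
      simp_rw [abs_neg]
      exact sum_le_sum fun j _ =>
        le_abs_one_sub_rpow_add_mul_abs_rpow hp.le hc₀ hc₁ hD.le hcrit (x j)
    obtain ⟨i, -, hi⟩ := exists_le_of_sum_le ⟨⟨0, by omega⟩, mem_univ _⟩ hlower
    exact ⟨i, Real.rpow_le_rpow (by positivity) hi (by positivity)⟩
end

section
/- Let p > 1 be a real number, let d' ≥ 2, let c = 1/(1 + (d'−1)^{1/(p−1)}), and let r = ((d'−1)c^p + (1−c)^p)^{1/p}. Let e_1,…,e_{d'+1} be the standard basis vectors of ℝ^{d'+1}. Suppose x ∈ ℝ^{d'+1} satisfies ||x||_p ≤ c·(d')^{1/p}, and there are signs s_1,…,s_{d'} ∈ {−1, +1} such that ||x − s_i e_i||_p ≤ r for every i ∈ {1,…,d'}. Then x_i = s_i·c for every i ∈ {1,…,d'} and x_{d'+1} = 0. -/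
/-!
Raise the `i`-th ball condition to the power `p` and sum over `i`. With `m = d' - 1`, the sum
becomes `∑ i, g (s i * x i) + d' |x_{d'+1}|^p ≤ d' r^p`, where `g u = m |u|^p + |u - 1|^p`.
The function `g` is strictly convex, and `c` is the zero of its derivative: `(1 - c) / c` equals
`m^(1/(p-1))`, so `m c^(p-1) = (1 - c)^(p-1)`. Hence `g u > g c = r^p` whenever `u ≠ c`, and the
summed inequality can only hold if `s i * x i = c` for every `i` and `x_{d'+1} = 0`.
-/

open Set

theorem strictConvexOn_abs_rpow {p : ℝ} (hp : 1 < p) :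
    StrictConvexOn ℝ univ fun u : ℝ => |u| ^ p := by
  refine ⟨convex_univ, fun u _ v _ huv a b ha hb hab => ?_⟩
  simp only [smul_eq_mul]
  rcases eq_or_ne |u| |v| with huv' | huv'
  · have hv : v = -u := by
      rcases abs_eq_abs.mp huv' with h | h
      exacts [absurd h huv, by linarith]
    have hu : 0 < |u| := abs_pos.mpr fun hu => huv (by simp [hv, hu])
    have hab' : |a - b| < 1 := abs_sub_lt_iff.mpr ⟨by linarith, by linarith⟩
    calc |a * u + b * v| ^ p = (|a - b| * |u|) ^ p := by
          rw [hv, ← abs_mul]; ring_nf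
      _ < |u| ^ p := by
          gcongr
          exact mul_lt_of_lt_one_left hu hab'
      _ = a * |u| ^ p + b * |v| ^ p := by
          rw [← huv', ← add_mul, hab, one_mul]
  · calc |a * u + b * v| ^ p ≤ (a * |u| + b * |v|) ^ p := by
          gcongr
          calc |a * u + b * v| ≤ |a * u| + |b * v| := abs_add_le _ _
            _ = a * |u| + b * |v| := by rw [abs_mul, abs_mul, abs_of_pos ha, abs_of_pos hb]
      _ < a * |u| ^ p + b * |v| ^ p :=
          (strictConvexOn_rpow hp).2 (abs_nonneg u) (abs_nonneg v) huv' ha hb hab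

theorem StrictConvexOn.lt_of_hasDerivAt_eq_zero {f : ℝ → ℝ} {c u : ℝ}
    (hf : StrictConvexOn ℝ univ f) (hc : HasDerivAt f 0 c) (hu : u ≠ c) : f c < f u := by
  rcases hu.lt_or_gt with h | h
  · have := hf.slope_lt_of_hasDerivAt (mem_univ u) (mem_univ c) h hc
    rw [slope_def_field, div_neg_iff] at this
    rcases this with ⟨_, h'⟩ | ⟨h', _⟩ <;> linarith
  · have := hf.lt_slope_of_hasDerivAt (mem_univ c) (mem_univ u) h hc
    rw [slope_def_field, div_pos_iff] at this
    rcases this with ⟨h', _⟩ | ⟨_, h'⟩ <;> linarith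

theorem one_div_one_add_mem_Ioo {t : ℝ} (ht : 0 < t) : 1 / (1 + t) ∈ Ioo 0 1 :=
  ⟨by positivity, (div_lt_one (by positivity)).mpr (by linarith)⟩

theorem mul_rpow_sub_one_eq_one_sub_rpow_sub_one {p m c : ℝ} (hp : 1 < p) (hm : 0 < m)
    (hc : c = 1 / (1 + m ^ (1 / (p - 1)))) : m * c ^ (p - 1) = (1 - c) ^ (p - 1) := by
  have hM : 0 < m ^ (1 / (p - 1)) := by positivity
  have hc0 : 0 < c := by rw [hc]; positivity
  have h1c : 1 - c = m ^ (1 / (p - 1)) * c := by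
    rw [hc]; field_simp; ring
  rw [h1c, Real.mul_rpow hM.le hc0.le, ← Real.rpow_mul hm.le, one_div_mul_cancel (by linarith),
    Real.rpow_one]

theorem mul_abs_rpow_add_abs_sub_one_rpow_lt {p m c u : ℝ} (hp : 1 < p) (hm : 0 < m)
    (hc : c = 1 / (1 + m ^ (1 / (p - 1)))) (hu : u ≠ c) :
    m * |c| ^ p + |c - 1| ^ p < m * |u| ^ p + |u - 1| ^ p := by
  obtain ⟨hc0, hc1⟩ : c ∈ Ioo 0 1 := hc ▸ one_div_one_add_mem_Ioo (by positivity)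
  replace hc1 : 0 < 1 - c := sub_pos.mpr hc1
  set f : ℝ → ℝ := fun u => m * |u| ^ p + |u - 1| ^ p
  have hf : StrictConvexOn ℝ univ f := by
    have h1 := (strictConvexOn_abs_rpow hp).translate_left (-1)
    simp only [preimage_univ] at h1
    exact ((strictConvexOn_abs_rpow hp).convexOn.smul hm.le).add_strictConvexOn h1
  have hderiv : HasDerivAt f 0 c := by
    have := ((hasDerivAt_abs_rpow c hp).const_mul m).add
      ((hasDerivAt_abs_rpow (c - 1) hp).comp c ((hasDerivAt_id c).sub_const 1))
    refine this.congr_deriv ?_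
    have hpow : ∀ t : ℝ, 0 < t → t ^ (p - 2) * t = t ^ (p - 1) := fun t ht => by
      rw [← Real.rpow_add_one ht.ne']; ring_nf
    rw [abs_of_pos hc0, abs_sub_comm, abs_of_pos hc1, show c - 1 = -(1 - c) by ring,
      mul_assoc, hpow c hc0, mul_neg, mul_assoc, hpow (1 - c) hc1,
      ← mul_rpow_sub_one_eq_one_sub_rpow_sub_one hp hm hc]
    ring
  exact hf.lt_of_hasDerivAt_eq_zero hderiv hu

theorem Fintype.sum_comp_sub_single {ι G M : Type*} [Fintype ι] [DecidableEq ι] [AddCommGroup G]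
    [AddCommGroup M] (f : G → M) (x : ι → G) (k : ι) (a : G) :
    ∑ j, f (x j - (Pi.single k a : ι → G) j) = ∑ j, f (x j) + (f (x k - a) - f (x k)) := by
  rw [← sub_eq_iff_eq_add', ← Finset.sum_sub_distrib, Finset.sum_eq_single k]
  · simp
  · intro j _ hj
    simp [hj]
  · simp

theorem Fin.sum_comp_sub_ite_val_eq {n : ℕ} {G M : Type*} [AddCommGroup G] [AddCommGroup M]
    (f : G → M) (x : Fin (n + 1) → G) (i : Fin n) (a : G) :
    ∑ j, f (x j - if (j : ℕ) = i then a else 0)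
      = ∑ j, f (x j) + (f (x i.castSucc - a) - f (x i.castSucc)) := by
  rw [← Fintype.sum_comp_sub_single]
  simp [Pi.single_apply, Fin.ext_iff]

theorem Fin.sum_sum_add_sub_castSucc {n : ℕ} (x : Fin (n + 1) → ℝ) (w : Fin n → ℝ) :
    ∑ i : Fin n, (∑ j, x j + (w i - x i.castSucc))
      = ∑ i, ((n - 1) * x i.castSucc + w i) + n * x (Fin.last n) := by
  simp only [Finset.sum_add_distrib, Finset.sum_sub_distrib, Finset.sum_const, Finset.card_univ,
    Fintype.card_fin, nsmul_eq_mul, Fin.sum_univ_castSucc, ← Finset.mul_sum]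
  ring

theorem abs_mul_eq_and_abs_mul_sub_one_eq {s y : ℝ} (hs : s = 1 ∨ s = -1) :
    |s * y| = |y| ∧ |s * y - 1| = |y - s| := by
  rcases hs with rfl | rfl
  · simp
  · simp [← abs_neg (-y - 1), add_comm]

theorem forall_eq_and_eq_zero_of_sum_add_le {ι : Type*} [Fintype ι] {g : ι → ℝ} {a L : ℝ}
    (hg : ∀ i, a ≤ g i) (hL : 0 ≤ L) (h : ∑ i, g i + L ≤ Fintype.card ι * a) :
    (∀ i, g i = a) ∧ L = 0 := by
  have hexcess : ∑ i, (g i - a) + L ≤ 0 := by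
    have : ∑ i, (g i - a) = ∑ i, g i - Fintype.card ι * a := by simp [Finset.sum_sub_distrib]
    linarith
  have hnonneg : 0 ≤ ∑ i, (g i - a) := Finset.sum_nonneg fun i _ => sub_nonneg.mpr (hg i)
  have hzero : ∑ i, (g i - a) = 0 := by linarith
  rw [Finset.sum_eq_zero_iff_of_nonneg fun i _ => sub_nonneg.mpr (hg i)] at hzero
  exact ⟨fun i => sub_eq_zero.mp (hzero i (Finset.mem_univ i)), by linarith⟩

/-- Let `p > 1` be real, `d' ≥ 2`, `c = 1/(1 + (d'-1)^(1/(p-1)))` and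
`r = ((d'-1) c^p + (1-c)^p)^(1/p)`.  If `x ∈ ℝ^{d'+1}` satisfies
`‖x‖_p ≤ c (d')^(1/p)` and there are signs `s_i ∈ {-1, +1}` with
`‖x - s_i e_i‖_p ≤ r` for every `i ∈ {1,…,d'}` (where `e_i` are the standard basis
vectors of `ℝ^{d'+1}`), then `x_i = s_i c` for every `i ∈ {1,…,d'}` and
`x_{d'+1} = 0`. -/
theorem stmt_5 (p : ℝ) (hp : 1 < p) (d' : ℕ) (hd' : 2 ≤ d')
    (x : Fin (d' + 1) → ℝ) (s : Fin d' → ℝ) (hs : ∀ i, s i = 1 ∨ s i = -1) :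
    let c : ℝ := 1 / (1 + ((d' : ℝ) - 1) ^ ((1 : ℝ) / (p - 1)))
    let r : ℝ := (((d' : ℝ) - 1) * c ^ p + (1 - c) ^ p) ^ ((1 : ℝ) / p)
    (∑ j : Fin (d' + 1), |x j| ^ p) ^ ((1 : ℝ) / p) ≤ c * (d' : ℝ) ^ ((1 : ℝ) / p) →
    (∀ i : Fin d',
      (∑ j : Fin (d' + 1), |x j - (if (j : ℕ) = (i : ℕ) then s i else 0)| ^ p)
          ^ ((1 : ℝ) / p) ≤ r) →
    (∀ i : Fin d', x (Fin.castSucc i) = s i * c) ∧ x (Fin.last d') = 0 := by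
  intro c r _ hball
  have hp0 : 0 < p := by linarith
  have hm : 0 < (d' : ℝ) - 1 := by
    have : (2 : ℝ) ≤ d' := by exact_mod_cast hd'
    linarith
  obtain ⟨hc0, hc1⟩ : c ∈ Ioo 0 1 := one_div_one_add_mem_Ioo (by positivity)
  set g : ℝ → ℝ := fun u => ((d' : ℝ) - 1) * |u| ^ p + |u - 1| ^ p
  have hgc : g c = ((d' : ℝ) - 1) * c ^ p + (1 - c) ^ p := by
    simp only [g, abs_of_pos hc0, abs_sub_comm c, abs_of_pos (sub_pos.2 hc1)]
  have hrow :
      ∀ i, ∑ j, |x j| ^ p + (|x i.castSucc - s i| ^ p - |x i.castSucc| ^ p) ≤ g c := by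
    intro i
    have := hball i
    rw [Real.rpow_le_rpow_iff (by positivity) (by have := sub_pos.2 hc1; positivity)
      (by positivity), Fin.sum_comp_sub_ite_val_eq (|·| ^ p)] at this
    rwa [hgc]
  have hsign := fun i => abs_mul_eq_and_abs_mul_sub_one_eq (y := x i.castSucc) (hs i)
  have hsum : ∑ i, g (s i * x i.castSucc) + d' * |x (Fin.last d')| ^ p
      ≤ Fintype.card (Fin d') * g c := by
    calc _ = ∑ i, (∑ j, |x j| ^ p + (|x i.castSucc - s i| ^ p - |x i.castSucc| ^ p)) := by
          simp only [Fin.sum_sum_add_sub_castSucc, g, (hsign _).1, (hsign _).2]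
      _ ≤ ∑ _i : Fin d', g c := Finset.sum_le_sum fun i _ => hrow i
      _ = _ := by simp
  have hlt : ∀ u ≠ c, g c < g u := fun u hu => mul_abs_rpow_add_abs_sub_one_rpow_lt hp hm rfl hu
  obtain ⟨hmin, hlast⟩ := forall_eq_and_eq_zero_of_sum_add_le
    (fun i => (eq_or_ne (s i * x i.castSucc) c).elim (fun h => h ▸ le_rfl) (hlt _ · |>.le))
    (by positivity) hsum
  refine ⟨fun i => ?_, ?_⟩
  · have hsyc : s i * x i.castSucc = c := by_contra fun h => (hlt _ h).ne' (hmin i)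
    rcases hs i with h | h <;> simp only [h] at hsyc ⊢ <;> linarith
  · simpa [hp0.ne', show d' ≠ 0 by omega] using hlast
end

section
/- Let d ≥ 1, ε > 0, and c_1, c_2, v ∈ ℝ^d. Define ĉ ∈ ℝ^d coordinatewise by ĉ_j = c_{1,j} + sgn(c_{2,j} − c_{1,j})·min(|c_{2,j} − c_{1,j}|, ε), where sgn(t) is 1 if t > 0, −1 if t < 0, and 0 if t = 0. Then ||ĉ − c_1||_∞ ≤ ε, and for every c̃ ∈ ℝ^d with ||c̃ − c_1||_∞ ≤ ε and ||c̃ − v||_∞ ≤ ||c_2 − v||_∞, it also holds that ||ĉ − v||_∞ ≤ ||c_2 − v||_∞. (Thus the single point ĉ is, within the budget ε, at least as close to every voter as any other feasible point that beats c_2 for that voter.) -/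
lemma scalar_budget (a b ε : ℝ) (hε : 0 < ε) :
    |a + Real.sign (b - a) * min |b - a| ε - a| ≤ ε := by
  rcases lt_trichotomy (b - a) 0 with h1 | h1 | h1
  · rw [Real.sign_of_neg h1, abs_of_neg h1]
    rcases min_cases (-(b - a)) ε with ⟨he, h2⟩ | ⟨he, h2⟩ <;>
      rw [he, abs_le] <;> constructor <;> linarith
  · rw [sub_eq_zero] at h1
    simp [h1, hε.le]
  · rw [Real.sign_of_pos h1, abs_of_pos h1]
    rcases min_cases (b - a) ε with ⟨he, h2⟩ | ⟨he, h2⟩ <;>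
      rw [he, abs_le] <;> constructor <;> linarith

lemma scalar_key (a b w c ε M : ℝ) (hε : 0 < ε)
    (h1 : |c - a| ≤ ε) (h2 : |c - w| ≤ M) (h3 : |b - w| ≤ M) :
    |a + Real.sign (b - a) * min |b - a| ε - w| ≤ M := by
  rw [abs_le] at *
  rcases lt_trichotomy (b - a) 0 with ht | ht | ht
  · rw [Real.sign_of_neg ht, abs_of_neg ht]
    rcases min_cases (-(b - a)) ε with ⟨he, _⟩ | ⟨he, _⟩ <;>
      rw [he] <;> constructor <;> linarith
  · rw [sub_eq_zero] at ht
    subst ht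
    simpa using h3
  · rw [Real.sign_of_pos ht, abs_of_pos ht]
    rcases min_cases (b - a) ε with ⟨he, _⟩ | ⟨he, _⟩ <;>
      rw [he] <;> constructor <;> linarith

/-- Constructive control with two candidates under the `l_∞` norm: the point `chat`
obtained by moving each coordinate of `c₁` towards `c₂` by at most `ε`
(`chat_j = c₁_j + sgn(c₂_j - c₁_j) · min(|c₂_j - c₁_j|, ε)`) is within the budget, and for
every voter `v`: if any feasible point `cnew` (i.e. `‖cnew - c₁‖_∞ ≤ ε`) satisfies
`‖cnew - v‖_∞ ≤ ‖c₂ - v‖_∞`, then so does `chat`.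

Here the norm `‖·‖` on `Fin d → ℝ` is the sup (`l_∞`) norm, and `Real.sign t` is `1` if
`t > 0`, `-1` if `t < 0` and `0` if `t = 0`. -/
theorem stmt_7 (d : ℕ) (hd : 1 ≤ d) (ε : ℝ) (hε : 0 < ε)
    (c₁ c₂ v : Fin d → ℝ) :
    let chat : Fin d → ℝ :=
      fun j => c₁ j + Real.sign (c₂ j - c₁ j) * min |c₂ j - c₁ j| ε
    ‖chat - c₁‖ ≤ ε ∧
      ∀ cnew : Fin d → ℝ, ‖cnew - c₁‖ ≤ ε → ‖cnew - v‖ ≤ ‖c₂ - v‖ → ‖chat - v‖ ≤ ‖c₂ - v‖ := by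
  intro chat
  constructor
  · rw [pi_norm_le_iff_of_nonneg hε.le]
    intro j
    simp only [Real.norm_eq_abs, Pi.sub_apply, chat]
    exact scalar_budget (c₁ j) (c₂ j) ε hε
  · intro cnew hb hv
    have hM : (0 : ℝ) ≤ ‖c₂ - v‖ := norm_nonneg _
    rw [pi_norm_le_iff_of_nonneg hM]
    intro j
    have h1 : |cnew j - c₁ j| ≤ ε := by
      simpa [Real.norm_eq_abs] using (norm_le_pi_norm (cnew - c₁) j).trans hb
    have h2 : |cnew j - v j| ≤ ‖c₂ - v‖ := by
      simpa [Real.norm_eq_abs] using (norm_le_pi_norm (cnew - v) j).trans hv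
    have h3 : |c₂ j - v j| ≤ ‖c₂ - v‖ := by
      simpa [Real.norm_eq_abs] using norm_le_pi_norm (c₂ - v) j
    simp only [Real.norm_eq_abs, Pi.sub_apply, chat]
    exact scalar_key (c₁ j) (c₂ j) (v j) (cnew j) ε (‖c₂ - v‖) hε h1 h2 h3
end

section
/- Let d ≥ 1 and work in ℝ^d with the Euclidean (l_2) norm. Let B_c be the closed ball with center y_0 and radius ρ > 0, and for j = 1,…,k let B_j be the closed ball with center a_j and radius b_j > 0; let S_c, S_1,…,S_k denote the corresponding spheres (boundaries). Suppose P ⊆ ℝ^d satisfies: for every subset F of the index set {c, 1,…,k} with |F| ≤ d, (i) if the intersection of the spheres ⋂_{j∈F} S_j is nonempty and connected then P contains a point of ⋂_{j∈F} S_j, and (ii) if ⋂_{j∈F} S_j contains at most two points then ⋂_{j∈F} S_j ⊆ P. Then for every subset {i_1,…,i_r} ⊆ {1,…,k}: if there exists x ∈ B_c with x not in the open ball int B_j for all j ∈ {i_1,…,i_r}, then there exists p ∈ P with p ∈ B_c and p not in the open ball int B_j for all j ∈ {i_1,…,i_r}. -/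
/-!
Write `K = B_c ∩ ⋂_{j ∈ T} (int B_j)ᶜ` as an intersection of closed sets whose frontiers lie in
the spheres `S_o`. Maintain an intersection `M = ⋂_{o ∈ F} S_o` that meets `K` and is a sphere
inside an affine subspace of dimension at most `d + 1 - |F|`. If that dimension is at most one,
`M` has at most two points, all in `P` by (ii). Otherwise `M` is connected: either `M ⊆ K` and
(i) gives a point of `P` in `K`, or `M` meets `K` at a point of the frontier of some constraint
whose sphere `S_o` does not contain `M`, and `M ∩ S_o` is a sphere of smaller dimension still
meeting `K`. The descent starts from `M = ℝ^d`.
-/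

open Metric Module Set
open scoped RealInnerProductSpace

section AffSphere

variable {E : Type*} [NormedAddCommGroup E] [InnerProductSpace ℝ E]

def affSphere (V : Submodule ℝ E) (c : E) (r : ℝ) : Set E :=
  {x | x - c ∈ V ∧ ‖x - c‖ = r}

lemma sphere_eq_affSphere_top (c : E) (r : ℝ) : sphere c r = affSphere ⊤ c r := by
  ext x; simp [affSphere]

lemma eq_or_eq_neg_of_norm_eq_of_finrank_le_one {F : Type*} [NormedAddCommGroup F]
    [NormedSpace ℝ F] [FiniteDimensional ℝ F] (hF : finrank ℝ F ≤ 1) {u w : F}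
    (h : ‖u‖ = ‖w‖) : u = w ∨ u = -w := by
  obtain ⟨v, hv⟩ := finrank_le_one_iff.mp hF
  obtain ⟨s, rfl⟩ := hv u
  obtain ⟨t, rfl⟩ := hv w
  rcases eq_or_ne v 0 with rfl | hv0
  · simp
  have hst : |s| = |t| := by
    simpa [norm_smul, norm_ne_zero_iff.mpr hv0] using h
  rcases abs_eq_abs.mp hst with rfl | rfl
  · exact .inl rfl
  · exact .inr (neg_smul t v)

lemma affSphere_subset_pair [FiniteDimensional ℝ E] {V : Submodule ℝ E} (hV : finrank ℝ V ≤ 1)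
    (c : E) (r : ℝ) : ∃ u w : E, affSphere V c r ⊆ {u, w} := by
  rcases (affSphere V c r).eq_empty_or_nonempty with h | ⟨y, hyV, hy⟩
  · exact ⟨c, c, h.trans_subset (empty_subset _)⟩
  refine ⟨y, c - (y - c), fun x ⟨hxV, hx⟩ => ?_⟩
  rcases eq_or_eq_neg_of_norm_eq_of_finrank_le_one hV
      (u := ⟨x - c, hxV⟩) (w := ⟨y - c, hyV⟩) (by simpa using hx.trans hy.symm) with h | h
  · left; simpa using congrArg Subtype.val h
  · have hx' : x - c = -(y - c) := congrArg Subtype.val h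
    right
    rw [mem_singleton_iff, ← sub_add_cancel x c, hx']
    abel

lemma isConnected_affSphere [FiniteDimensional ℝ E] {V : Submodule ℝ E} (hV : 2 ≤ finrank ℝ V)
    (c : E) {r : ℝ} (hr : 0 ≤ r) : IsConnected (affSphere V c r) := by
  have himg : affSphere V c r = (fun v : V => c + (v : E)) '' sphere 0 r := by
    ext x
    refine ⟨fun ⟨hxV, hx⟩ => ⟨⟨x - c, hxV⟩, by simpa using hx, by simp⟩, ?_⟩
    rintro ⟨v, hv, rfl⟩
    exact ⟨by simp, by simpa using hv⟩
  rw [himg]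
  exact (isConnected_sphere (by rw [← finrank_eq_rank]; exact_mod_cast hV) 0 hr).image _
    (by fun_prop)

lemma affSphere_inter_eq_affSphere [FiniteDimensional ℝ E] {V W : Submodule ℝ E} (hWV : W ≤ V)
    {c y : E} {r : ℝ} (hy : y ∈ affSphere V c r) :
    ∃ c' r', affSphere V c r ∩ {x | x - y ∈ W} = affSphere W c' r' := by
  -- `c'` is the foot of the perpendicular from `c` to the affine subspace `y + W`
  set c' := y - W.starProjection (y - c)
  have hyc' : y - c' ∈ W := by
    simpa only [c', sub_sub_cancel] using W.starProjection_apply_mem (y - c)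
  have hc'c : c' - c ∈ Wᗮ := by
    simpa [c', sub_right_comm] using W.sub_starProjection_mem_orthogonal (y - c)
  have hc'cV : c' - c ∈ V := by
    simpa [c', sub_right_comm] using V.sub_mem hy.1 (hWV (W.starProjection_apply_mem (y - c)))
  have pythagoras : ∀ x, x - c' ∈ W → ‖x - c‖ ^ 2 = ‖x - c'‖ ^ 2 + ‖c' - c‖ ^ 2 := fun x hx => by
    rw [← sub_add_sub_cancel x c' c, norm_add_sq_real, W.inner_right_of_mem_orthogonal hx hc'c]
    ring
  have norm_eq_iff : ∀ x, x - c' ∈ W → (‖x - c‖ = r ↔ ‖x - c'‖ = ‖y - c'‖) := fun x hx => by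
    rw [← hy.2, ← sq_eq_sq₀ (norm_nonneg _) (norm_nonneg _),
      ← sq_eq_sq₀ (norm_nonneg _) (norm_nonneg _), pythagoras x hx, pythagoras y hyc', add_left_inj]
  refine ⟨c', ‖y - c'‖, Set.ext fun x => ?_⟩
  have hxW : x - y ∈ W ↔ x - c' ∈ W := by
    rw [← W.add_mem_iff_left hyc', sub_add_sub_cancel]
  constructor
  · rintro ⟨⟨-, hx⟩, hxy⟩
    have hxc' := hxW.mp hxy
    exact ⟨hxc', (norm_eq_iff x hxc').mp hx⟩
  · rintro ⟨hxc', hx⟩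
    refine ⟨⟨?_, (norm_eq_iff x hxc').mpr hx⟩, hxW.mpr hxc'⟩
    simpa using V.add_mem (hWV hxc') hc'cV

lemma norm_sub_sq_sub_norm_sub_sq {c y x α : E} (h : ‖x - c‖ = ‖y - c‖) :
    ‖x - α‖ ^ 2 - ‖y - α‖ ^ 2 = 2 * ⟪x - y, c - α⟫ := by
  have hx : x - α = (x - c) + (c - α) := by abel
  have hy : y - α = (y - c) + (c - α) := by abel
  rw [hx, hy, norm_add_sq_real, norm_add_sq_real, h]
  simp only [inner_sub_left]
  ring

lemma affSphere_inter_sphere [FiniteDimensional ℝ E] {V : Submodule ℝ E} {c y z α : E} {r β : ℝ}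
    (hy : y ∈ affSphere V c r ∩ sphere α β) (hz : z ∈ affSphere V c r) (hzS : z ∉ sphere α β) :
    ∃ V' < V, ∃ c' r', affSphere V c r ∩ sphere α β = affSphere V' c' r' := by
  set V' := V ⊓ (ℝ ∙ (c - α))ᗮ
  have mem_sphere_iff : ∀ x ∈ affSphere V c r, x ∈ sphere α β ↔ x - y ∈ V' := fun x hx => by
    have hxy : x - y ∈ V := by simpa using V.sub_mem hx.1 hy.1.1
    rw [Submodule.mem_inf, Submodule.mem_orthogonal_singleton_iff_inner_right, real_inner_comm,
      ← mul_eq_zero_iff_left two_ne_zero, ← norm_sub_sq_sub_norm_sub_sq (hx.2.trans hy.1.2.symm),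
      sub_eq_zero, sq_eq_sq₀ (norm_nonneg _) (norm_nonneg _), mem_sphere_iff_norm,
      ← mem_sphere_iff_norm.mp hy.2]
    exact ⟨fun h => ⟨hxy, h⟩, fun h => h.2⟩
  have hV' : V' < V := lt_of_le_of_ne inf_le_left fun h =>
    hzS ((mem_sphere_iff z hz).mpr (h ▸ by simpa using V.sub_mem hz.1 hy.1.1))
  obtain ⟨c', r', h⟩ := affSphere_inter_eq_affSphere inf_le_left hy.1
  refine ⟨V', hV', c', r', ?_⟩
  rw [← h]
  ext x
  exact ⟨fun hx => ⟨hx.1, (mem_sphere_iff x hx.1).mp hx.2⟩,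
    fun hx => ⟨hx.1, (mem_sphere_iff x hx.1).mpr hx.2⟩⟩

end AffSphere

theorem IsPreconnected.exists_mem_frontier_of_not_subset_biInter {X ι : Type*}
    [TopologicalSpace X] {M : Set X} (hM : IsPreconnected M) {s : Finset ι} {C : ι → Set X}
    (hC : ∀ i ∈ s, IsClosed (C i)) (hne : (M ∩ ⋂ i ∈ s, C i).Nonempty)
    (hMC : ¬ M ⊆ ⋂ i ∈ s, C i) :
    ∃ y ∈ M ∩ ⋂ i ∈ s, C i, ∃ i ∈ s, y ∈ frontier (C i) ∧ ¬ M ⊆ C i := by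
  have hcover : M ⊆ (⋂ i ∈ s, C i) ∪ ⋃ i ∈ s, closure (M \ C i) := fun x hx => by
    by_cases hxC : x ∈ ⋂ i ∈ s, C i
    · exact .inl hxC
    · obtain ⟨i, hi, hxi⟩ : ∃ i ∈ s, x ∉ C i := by simpa using hxC
      exact .inr (mem_biUnion hi (subset_closure ⟨hx, hxi⟩))
  have hout : (M ∩ ⋃ i ∈ s, closure (M \ C i)).Nonempty := by
    obtain ⟨x, hx, hxC⟩ := not_subset.mp hMC
    exact ⟨x, hx, (hcover hx).resolve_left hxC⟩
  obtain ⟨y, hyM, hyC, hy⟩ := isPreconnected_closed_iff.mp hM _ _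
    (isClosed_biInter hC) (s.finite_toSet.isClosed_biUnion fun _ _ => isClosed_closure) hcover
    hne hout
  obtain ⟨i, hi, hyi⟩ := mem_iUnion₂.mp hy
  refine ⟨y, ⟨hyM, hyC⟩, i, hi, ?_, fun hMi => ?_⟩
  · rw [frontier_eq_closure_inter_closure]
    exact ⟨subset_closure (mem_iInter₂.mp hyC i hi), closure_mono (sdiff_subset_compl _ _) hyi⟩
  · simp [sdiff_eq_empty.mpr hMi] at hyi

section RepresentativeSet

variable {E : Type*} [NormedAddCommGroup E] [InnerProductSpace ℝ E] {ι : Type*}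

structure IsRepresentativeSet (S : ι → Set E) (n : ℕ) (P : Set E) : Prop where
  inter_nonempty_of_isConnected : ∀ F : Finset ι, F.card ≤ n →
    IsConnected (⋂ i ∈ F, S i) → (P ∩ ⋂ i ∈ F, S i).Nonempty
  subset_of_subset_pair : ∀ F : Finset ι, F.card ≤ n →
    (∃ u w : E, (⋂ i ∈ F, S i) ⊆ {u, w}) → (⋂ i ∈ F, S i) ⊆ P

variable [FiniteDimensional ℝ E] {S C : ι → Set E} {P : Set E} {G : Finset ι}

theorem IsRepresentativeSet.inter_nonempty_of_biInter_eq_affSphere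
    (hP : IsRepresentativeSet S (finrank ℝ E) P) (hS : ∀ i, ∃ α β, S i = sphere α β)
    (hC : ∀ i, IsClosed (C i)) (hfrontier : ∀ i, frontier (C i) ⊆ S i) (hSC : ∀ i, S i ⊆ C i)
    {F : Finset ι} {V : Submodule ℝ E} {c : E} {r : ℝ} (hF : ⋂ i ∈ F, S i = affSphere V c r)
    (hcard : F.card ≤ finrank ℝ E) (hdim : F.card + finrank ℝ V ≤ finrank ℝ E + 1)
    (hne : (affSphere V c r ∩ ⋂ i ∈ G, C i).Nonempty) : (P ∩ ⋂ i ∈ G, C i).Nonempty := by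
  classical
  induction hn : finrank ℝ V using Nat.strong_induction_on generalizing F V c r with
  | _ n IH =>
  subst hn
  obtain ⟨y, hyM, hyK⟩ := hne
  rcases le_or_gt (finrank ℝ V) 1 with hV | hV
  · obtain ⟨u, w, huw⟩ := affSphere_subset_pair hV c r
    exact ⟨y, hP.subset_of_subset_pair F hcard ⟨u, w, hF ▸ huw⟩ (hF ▸ hyM), hyK⟩
  have hM : IsConnected (affSphere V c r) := isConnected_affSphere hV c (hyM.2 ▸ norm_nonneg _)
  by_cases hMK : affSphere V c r ⊆ ⋂ i ∈ G, C i
  · obtain ⟨p, hpP, hpM⟩ := hP.inter_nonempty_of_isConnected F hcard (hF ▸ hM)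
    exact ⟨p, hpP, hMK (hF ▸ hpM)⟩
  obtain ⟨y, ⟨hyM, hyK⟩, i, -, hyi, hMi⟩ :=
    hM.isPreconnected.exists_mem_frontier_of_not_subset_biInter (fun i _ => hC i) ⟨y, hyM, hyK⟩ hMK
  obtain ⟨z, hzM, hzi⟩ := not_subset.mp hMi
  obtain ⟨α, β, hSi⟩ := hS i
  have hiF : i ∉ F := fun hi => hMi (hF ▸ (biInter_subset_of_mem hi).trans (hSC i))
  obtain ⟨V', hV'V, c', r', heq⟩ := affSphere_inter_sphere ⟨hyM, hSi ▸ hfrontier i hyi⟩ hzM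
    (fun hz => hzi (hSC i (hSi ▸ hz)))
  have hV' := Submodule.finrank_lt_finrank_of_lt hV'V
  refine IH _ hV' (F := insert i F) (c := c') (r := r')
    (by rw [Finset.set_biInter_insert, hF, hSi, inter_comm, heq]) ?_ ?_ ?_ rfl
  · rw [Finset.card_insert_of_notMem hiF]; omega
  · rw [Finset.card_insert_of_notMem hiF]; omega
  · exact ⟨y, heq ▸ ⟨hyM, hSi ▸ hfrontier i hyi⟩, hyK⟩

theorem IsRepresentativeSet.inter_biInter_nonempty
    (hP : IsRepresentativeSet S (finrank ℝ E) P) (hS : ∀ i, ∃ α β, S i = sphere α β)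
    (hC : ∀ i, IsClosed (C i)) (hfrontier : ∀ i, frontier (C i) ⊆ S i) (hSC : ∀ i, S i ⊆ C i)
    (hne : (⋂ i ∈ G, C i).Nonempty) : (P ∩ ⋂ i ∈ G, C i).Nonempty := by
  by_cases hK : univ ⊆ ⋂ i ∈ G, C i
  · have : Nonempty E := hne.to_subtype.map Subtype.val
    obtain ⟨p, hp, -⟩ :=
      hP.inter_nonempty_of_isConnected ∅ (by simp) (by simpa using isConnected_univ)
    exact ⟨p, hp, hK trivial⟩
  obtain ⟨y, ⟨-, hyK⟩, i, -, hyi, -⟩ :=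
    isPreconnected_univ.exists_mem_frontier_of_not_subset_biInter (fun i _ => hC i)
      (by simpa using hne) hK
  obtain ⟨α, β, hSi⟩ := hS i
  obtain ⟨x, hx⟩ := not_subset.mp hK
  have : Nontrivial E := nontrivial_of_ne y x fun h => hx.2 (h ▸ hyK)
  refine hP.inter_nonempty_of_biInter_eq_affSphere hS hC hfrontier hSC (F := {i}) (V := ⊤)
    (c := α) (r := β) (by simp [hSi, sphere_eq_affSphere_top]) finrank_pos (by simp [add_comm]) ?_
  exact ⟨y, sphere_eq_affSphere_top α β ▸ hSi ▸ hfrontier i hyi, hyK⟩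

end RepresentativeSet

theorem stmt_8_general (d k : ℕ)
    (y₀ : EuclideanSpace ℝ (Fin d)) (ρ : ℝ)
    (a : Fin k → EuclideanSpace ℝ (Fin d)) (b : Fin k → ℝ)
    (P : Set (EuclideanSpace ℝ (Fin d)))
    (Sph : Option (Fin k) → Set (EuclideanSpace ℝ (Fin d)))
    (hSph : Sph = fun o =>
      o.elim (Metric.sphere y₀ ρ) fun j => Metric.sphere (a j) (b j))
    (hP1 : ∀ F : Finset (Option (Fin k)), F.card ≤ d →
      IsConnected (⋂ o ∈ F, Sph o) → (P ∩ ⋂ o ∈ F, Sph o).Nonempty)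
    (hP2 : ∀ F : Finset (Option (Fin k)), F.card ≤ d →
      (∃ u w : EuclideanSpace ℝ (Fin d), (⋂ o ∈ F, Sph o) ⊆ {u, w}) →
      (⋂ o ∈ F, Sph o) ⊆ P)
    (T : Finset (Fin k))
    (hx : ∃ x ∈ Metric.closedBall y₀ ρ, ∀ j ∈ T, x ∉ Metric.ball (a j) (b j)) :
    ∃ p ∈ P, p ∈ Metric.closedBall y₀ ρ ∧ ∀ j ∈ T, p ∉ Metric.ball (a j) (b j) := by
  have hP : IsRepresentativeSet Sph (finrank ℝ (EuclideanSpace ℝ (Fin d))) P := by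
    rw [finrank_euclideanSpace_fin]
    exact ⟨hP1, hP2⟩
  subst hSph
  set C : Option (Fin k) → Set (EuclideanSpace ℝ (Fin d)) :=
    fun o => o.elim (closedBall y₀ ρ) fun j => (ball (a j) (b j))ᶜ
  have mem_K : ∀ x, x ∈ ⋂ o ∈ insert none (T.image some), C o ↔
      x ∈ closedBall y₀ ρ ∧ ∀ j ∈ T, x ∉ ball (a j) (b j) := by
    simp [C]
  obtain ⟨x, hx⟩ := hx
  obtain ⟨p, hpP, hpK⟩ := hP.inter_biInter_nonempty (C := C)
    (fun o => by cases o <;> exact ⟨_, _, rfl⟩)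
    (fun o => by cases o; exacts [isClosed_closedBall, isOpen_ball.isClosed_compl])
    (fun o => by
      cases o
      exacts [frontier_closedBall_subset_sphere,
        (frontier_compl (ball _ _)).trans_subset frontier_ball_subset_sphere])
    (fun o => by
      cases o; exacts [sphere_subset_closedBall, sphere_disjoint_ball.subset_compl_right])
    ⟨x, (mem_K x).mpr hx⟩
  exact ⟨p, hpP, (mem_K p).mp hpK⟩

/-- Lemma on representative points of intersections of spheres (avoid-ball lemma).
In `ℝ^d` with the Euclidean norm, let `B_c` be the closed ball of center `y₀` and
radius `ρ > 0` and let `B_j` (`j ∈ {1,…,k}`) be closed balls of centers `a j` and radii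
`b j > 0`; the spheres are indexed by `Option (Fin k)`, with `none` corresponding to the
boundary `S_c` of `B_c` and `some j` to the boundary `S_j` of `B_j`.  Suppose
`P ⊆ ℝ^d` satisfies: for every index set `F` with `|F| ≤ d`,
(i) if `⋂_{o ∈ F} S_o` is nonempty and connected, then `P` contains one of its points;
(ii) if `⋂_{o ∈ F} S_o` has at most two points, then it is contained in `P`.
Then for every subset `T ⊆ {1,…,k}`: if some `x ∈ B_c` lies outside the open balls
`int B_j` for all `j ∈ T`, then some `p ∈ P` lies in `B_c` and outside all those open
balls. -/
theorem stmt_8 (d k : ℕ) (hd : 1 ≤ d)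
    (y₀ : EuclideanSpace ℝ (Fin d)) (ρ : ℝ) (hρ : 0 < ρ)
    (a : Fin k → EuclideanSpace ℝ (Fin d)) (b : Fin k → ℝ) (hb : ∀ j, 0 < b j)
    (P : Set (EuclideanSpace ℝ (Fin d)))
    (Sph : Option (Fin k) → Set (EuclideanSpace ℝ (Fin d)))
    (hSph : Sph = fun o =>
      o.elim (Metric.sphere y₀ ρ) fun j => Metric.sphere (a j) (b j))
    (hP1 : ∀ F : Finset (Option (Fin k)), F.card ≤ d →
      IsConnected (⋂ o ∈ F, Sph o) → (P ∩ ⋂ o ∈ F, Sph o).Nonempty)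
    (hP2 : ∀ F : Finset (Option (Fin k)), F.card ≤ d →
      (∃ u w : EuclideanSpace ℝ (Fin d), (⋂ o ∈ F, Sph o) ⊆ {u, w}) →
      (⋂ o ∈ F, Sph o) ⊆ P)
    (T : Finset (Fin k))
    (hx : ∃ x ∈ Metric.closedBall y₀ ρ, ∀ j ∈ T, x ∉ Metric.ball (a j) (b j)) :
    ∃ p ∈ P, p ∈ Metric.closedBall y₀ ρ ∧ ∀ j ∈ T, p ∉ Metric.ball (a j) (b j) :=
  stmt_8_general d k y₀ ρ a b P Sph hSph hP1 hP2 T hx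
end

section
/- Let d, k ≥ 1 be integers, ε > 0, y ∈ ℝ^d, and for i ∈ {1,…,k} let a_i ∈ ℝ^d and b_i > 0. For each j ∈ {1,…,d}, let Q_j = (⋃_{i=1}^k {a_{i,j} − b_i, a_{i,j} + b_i}) ∩ [y_j − ε, y_j + ε], and set P_j = Q_j if Q_j is nonempty and P_j = {y_j} otherwise; let P = {p ∈ ℝ^d : p_j ∈ P_j for all j ∈ {1,…,d}}. If there exists ỹ ∈ ℝ^d with ||ỹ − y||_∞ ≤ ε and ||ỹ − a_i||_∞ ≥ b_i for all i ∈ {1,…,k}, then there exists p ∈ P with ||p − y||_∞ ≤ ε and ||p − a_i||_∞ ≥ b_i for all i ∈ {1,…,k}. -/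
open Classical

/-- Representative solution points for the non-convex `l_∞` feasibility problem
(Lemma `non_convex`).  For each coordinate `j`, let
`Q_j = (⋃_i {a_{i,j} - b_i, a_{i,j} + b_i}) ∩ [y_j - ε, y_j + ε]`, and let
`P_j = Q_j` if `Q_j` is nonempty and `P_j = {y_j}` otherwise.  If there is a feasible
point `ytil` (with `‖ytil - y‖_∞ ≤ ε` and `‖ytil - a_i‖_∞ ≥ b_i` for all `i`), then there is a
feasible point `p` with `p_j ∈ P_j` for all `j`.

Here the norm `‖·‖` on `Fin d → ℝ` is the sup (`l_∞`) norm. -/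
theorem stmt_9 (d k : ℕ) (hd : 1 ≤ d) (hk : 1 ≤ k) (ε : ℝ) (hε : 0 < ε)
    (y : Fin d → ℝ) (a : Fin k → Fin d → ℝ) (b : Fin k → ℝ) (hb : ∀ i, 0 < b i)
    (ytil : Fin d → ℝ) (h1 : ‖ytil - y‖ ≤ ε) (h2 : ∀ i, b i ≤ ‖ytil - a i‖) :
    let Q : Fin d → Set ℝ := fun j =>
      (⋃ i : Fin k, {a i j - b i, a i j + b i}) ∩ Set.Icc (y j - ε) (y j + ε)
    let P : Fin d → Set ℝ := fun j => if (Q j).Nonempty then Q j else {y j}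
    ∃ p : Fin d → ℝ, (∀ j, p j ∈ P j) ∧ ‖p - y‖ ≤ ε ∧ ∀ i, b i ≤ ‖p - a i‖ := by
  intro Q P
  have hεy : ∀ j, |ytil j - y j| ≤ ε := by
    intro j
    have h := norm_le_pi_norm (ytil - y) j
    have : ‖(ytil - y) j‖ ≤ ε := h.trans h1
    simpa [Real.norm_eq_abs] using this
  have key : ∀ j : Fin d, ∃ t : ℝ, t ∈ P j ∧ |t - y j| ≤ ε ∧
      ∀ i, b i ≤ |ytil j - a i j| → b i ≤ |t - a i j| := by
    intro j
    have hcy := abs_le.mp (hεy j)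
    by_cases hQ : (Q j).Nonempty
    · set c := ytil j with hc
      set F : Finset ℝ :=
        ((Finset.univ.image fun i => a i j - b i) ∪
          (Finset.univ.image fun i => a i j + b i)).filter
          (fun x => y j - ε ≤ x ∧ x ≤ y j + ε) with hF
      have hFQ : ∀ x : ℝ, x ∈ F ↔ x ∈ Q j := by
        intro x
        simp only [hF, Finset.mem_filter, Finset.mem_union, Finset.mem_image,
          Finset.mem_univ, true_and, Q, Set.mem_inter_iff, Set.mem_iUnion,
          Set.mem_insert_iff, Set.mem_singleton_iff, Set.mem_Icc]
        constructor
        · rintro ⟨(⟨i, hi⟩ | ⟨i, hi⟩), h⟩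
          · exact ⟨⟨i, Or.inl hi.symm⟩, h⟩
          · exact ⟨⟨i, Or.inr hi.symm⟩, h⟩
        · rintro ⟨⟨i, (hi | hi)⟩, h⟩
          · exact ⟨Or.inl ⟨i, hi.symm⟩, h⟩
          · exact ⟨Or.inr ⟨i, hi.symm⟩, h⟩
      have hFne : F.Nonempty := by
        obtain ⟨x, hx⟩ := hQ
        exact ⟨x, (hFQ x).mpr hx⟩
      obtain ⟨t, htF, hmin⟩ := F.exists_min_image (fun x => |x - c|) hFne
      have htQ : t ∈ Q j := (hFQ t).mp htF
      have htW : y j - ε ≤ t ∧ t ≤ y j + ε := htQ.2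
      refine ⟨t, ?_, by rw [abs_le]; constructor <;> linarith [htW.1, htW.2], ?_⟩
      · show t ∈ if (Q j).Nonempty then Q j else {y j}
        rw [if_pos hQ]; exact htQ
      · intro i hi
        by_contra hcon
        push_neg at hcon
        have habs := abs_lt.mp hcon
        rcases le_abs.mp hi with h' | h'
        · -- c - a i j ≥ b i, use right endpoint r = a i j + b i
          set r := a i j + b i with hr
          have hrc : r ≤ c := by linarith
          have htr : t < r := by linarith [habs.2]
          have hrF : r ∈ F := by
            rw [hFQ]
            refine ⟨Set.mem_iUnion.mpr ⟨i, Or.inr rfl⟩, ?_, ?_⟩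
            · linarith [htW.1]
            · linarith [hcy.2]
          have := hmin r hrF
          rw [abs_of_nonpos (by linarith), abs_of_nonpos (by linarith)] at this
          linarith
        · -- a i j - c ≥ b i, use left endpoint l = a i j - b i
          set l := a i j - b i with hl
          have hcl : c ≤ l := by linarith
          have hlt : l < t := by linarith [habs.1]
          have hlF : l ∈ F := by
            rw [hFQ]
            refine ⟨Set.mem_iUnion.mpr ⟨i, Or.inl rfl⟩, ?_, ?_⟩
            · linarith [hcy.1]
            · linarith [htW.2]
          have := hmin l hlF
          rw [abs_of_nonneg (by linarith), abs_of_nonneg (by linarith)] at this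
          linarith
    · refine ⟨y j, ?_, by simp [hε.le], ?_⟩
      · show y j ∈ if (Q j).Nonempty then Q j else {y j}
        rw [if_neg hQ]; exact rfl
      · intro i hi
        by_contra hcon
        push_neg at hcon
        have habs := abs_lt.mp hcon
        rcases le_abs.mp hi with h' | h'
        · exact hQ ⟨a i j + b i, Set.mem_iUnion.mpr ⟨i, Or.inr rfl⟩,
            by constructor <;> linarith [habs.2, hcy.2, hε]⟩
        · exact hQ ⟨a i j - b i, Set.mem_iUnion.mpr ⟨i, Or.inl rfl⟩,
            by constructor <;> linarith [habs.1, hcy.1, hε]⟩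
  choose p hp1 hp2 hp3 using key
  refine ⟨p, hp1, ?_, ?_⟩
  · rw [pi_norm_le_iff_of_nonneg hε.le]
    intro j
    simpa [Real.norm_eq_abs] using hp2 j
  · intro i
    have hw : ∃ j, b i ≤ |ytil j - a i j| := by
      by_contra hcon
      push_neg at hcon
      have : ‖ytil - a i‖ < b i := by
        rw [pi_norm_lt_iff (hb i)]
        intro j
        simpa [Real.norm_eq_abs] using hcon j
      exact absurd (h2 i) (not_le.mpr this)
    obtain ⟨j, hj⟩ := hw
    have := hp3 j i hj
    calc b i ≤ |p j - a i j| := this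
      _ = ‖(p - a i) j‖ := by simp [Real.norm_eq_abs]
      _ ≤ ‖p - a i‖ := norm_le_pi_norm _ j
end

section
/- Let p ≥ 2 be an integer and d ≥ 4 an integer, and let a = ((1/d + 1)^p + (d−1)(1/d)^p − 1)^{1/p}. Then there exist real numbers α > 0 and l > 0 such that (1/d + α)^p + 2|1/d − α|^p + (d−4)(1/d)^p + (1/d + lα)^p > a^p + 3α^p + (lα)^p > 3|1/d − α|^p + (d−4)(1/d)^p + (1/d + lα)^p. -/
set_option maxHeartbeats 1000000


/-- Existence of parameters `α > 0` and `l > 0` satisfying inequality (7) of the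
paper: with `a = ((1/d + 1)^p + (d-1)(1/d)^p - 1)^(1/p)`,
`(1/d + α)^p + 2|1/d - α|^p + (d-4)(1/d)^p + (1/d + lα)^p
  > a^p + 3α^p + (lα)^p
  > 3|1/d - α|^p + (d-4)(1/d)^p + (1/d + lα)^p`. -/
theorem stmt_12 (p : ℕ) (hp : 2 ≤ p) (d : ℕ) (hd : 4 ≤ d) :
    let a : ℝ :=
      ((1 / (d : ℝ) + 1) ^ p + ((d : ℝ) - 1) * (1 / (d : ℝ)) ^ p - 1) ^ ((1 : ℝ) / p)
    ∃ α : ℝ, 0 < α ∧ ∃ l : ℝ, 0 < l ∧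
      ((1 / (d : ℝ) + α) ^ p + 2 * |1 / (d : ℝ) - α| ^ p
          + ((d : ℝ) - 4) * (1 / (d : ℝ)) ^ p + (1 / (d : ℝ) + l * α) ^ p
        > a ^ p + 3 * α ^ p + (l * α) ^ p) ∧
      (a ^ p + 3 * α ^ p + (l * α) ^ p
        > 3 * |1 / (d : ℝ) - α| ^ p + ((d : ℝ) - 4) * (1 / (d : ℝ)) ^ p
            + (1 / (d : ℝ) + l * α) ^ p) := by
  intro a
  have hp0 : p ≠ 0 := by omega
  have hd0 : (0:ℝ) < (d:ℝ) := by
    have : (4:ℝ) ≤ (d:ℝ) := by exact_mod_cast hd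
    linarith
  set c : ℝ := 1 / (d:ℝ) with hcdef
  have hc : 0 < c := by positivity
  have hcp : 0 < c ^ p := pow_pos hc p
  have hd1 : (1:ℝ) ≤ (d:ℝ) := by
    have : (4:ℝ) ≤ (d:ℝ) := by exact_mod_cast hd
    linarith
  have h1cp : (1:ℝ) ≤ (c + 1) ^ p := one_le_pow₀ (by linarith)
  have hX0 : 0 ≤ (c + 1) ^ p + ((d:ℝ) - 1) * c ^ p - 1 := by
    have : 0 ≤ ((d:ℝ) - 1) * c ^ p := by nlinarith
    linarith
  have ha : a ^ p = (c + 1) ^ p + ((d:ℝ) - 1) * c ^ p - 1 := by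
    have : a = ((c + 1) ^ p + ((d:ℝ) - 1) * c ^ p - 1) ^ ((1:ℝ) / p) := rfl
    rw [this, one_div, Real.rpow_inv_natCast_pow hX0 hp0]
  -- target value for the intermediate value theorem
  set T : ℝ := (c + 1) ^ p - 1 + 5 * c ^ p with hT
  have hTgt : c ^ p < T := by nlinarith
  have hTpos : 0 < T := lt_trans hcp hTgt
  -- upper endpoint
  set M : ℝ := max 1 (T / (2 * c)) with hM
  have hM1 : (1:ℝ) ≤ M := le_max_left _ _
  have hM0 : (0:ℝ) ≤ M := by linarith
  have hMT : T ≤ 2 * c * M := by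
    have h2 : T / (2 * c) ≤ M := le_max_right _ _
    have h2c : (0:ℝ) < 2 * c := by linarith
    calc T = (T / (2 * c)) * (2 * c) := by field_simp
    _ ≤ M * (2 * c) := by nlinarith
    _ = 2 * c * M := by ring
  -- f M ≥ 2 c M
  have hfM : T ≤ (c + M) ^ p - M ^ p := by
    obtain ⟨k, hk⟩ : ∃ k, p = k + 2 := ⟨p - 2, by omega⟩
    have hMk : (1:ℝ) ≤ M ^ k := one_le_pow₀ hM1
    have hMk0 : (0:ℝ) < M ^ k := by linarith
    have hmono : M ^ k ≤ (c + M) ^ k := pow_le_pow_left₀ hM0 (by linarith) k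
    have : (c + M) ^ p - M ^ p = (c + M) ^ k * (c + M) ^ 2 - M ^ k * M ^ 2 := by
      rw [hk]; ring
    rw [this]
    have h1 : M ^ k * (M ^ 2 + 2 * c * M) ≤ (c + M) ^ k * (c + M) ^ 2 := by
      have h2 : M ^ 2 + 2 * c * M ≤ (c + M) ^ 2 := by nlinarith
      have h3 : (0:ℝ) ≤ M ^ 2 + 2 * c * M := by nlinarith
      exact mul_le_mul hmono h2 h3 (by positivity)
    have h5 : 2 * c * M ≤ M ^ k * (2 * c * M) :=
      le_mul_of_one_le_left (by positivity) hMk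
    nlinarith [h1, h5, hMT]
  -- intermediate value theorem
  have hcont : ContinuousOn (fun x : ℝ => (c + x) ^ p - x ^ p) (Set.Icc 0 M) :=
    (((continuous_const.add continuous_id).pow p).sub (continuous_id.pow p)).continuousOn
  have hmem : T ∈ Set.Icc ((fun x : ℝ => (c + x) ^ p - x ^ p) 0)
      ((fun x : ℝ => (c + x) ^ p - x ^ p) M) := by
    constructor
    · simp only [add_zero, zero_pow hp0, sub_zero]
      exact hTgt.le
    · exact hfM
  obtain ⟨β, hβmem, hβeq⟩ := intermediate_value_Icc hM0 hcont hmem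
  simp only at hβeq
  have hβpos : 0 < β := by
    rcases lt_or_eq_of_le hβmem.1 with h | h
    · exact h
    · exfalso
      rw [← h] at hβeq
      simp only [add_zero, zero_pow hp0, sub_zero] at hβeq
      linarith
  refine ⟨c, hc, β / c, by positivity, ?_, ?_⟩
  all_goals
    have habs : |c - c| = 0 := by simp
    have hlc : β / c * c = β := div_mul_cancel₀ β hc.ne'
    have hcc : (c + c) ^ p = 2 ^ p * c ^ p := by
      rw [show c + c = 2 * c by ring, mul_pow]
    have h2p : (4:ℝ) ≤ 2 ^ p := by
      calc (4:ℝ) = 2 ^ 2 := by norm_num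
      _ ≤ 2 ^ p := pow_le_pow_right₀ (by norm_num) hp
    have h2pc : 4 * c ^ p ≤ 2 ^ p * c ^ p := by nlinarith
    rw [ha, habs, hlc, zero_pow hp0]
  · rw [hcc]; linarith [hβeq]
  · linarith [hβeq]
end

section
/- Let p ≥ 2 be an integer and d' ≥ 4 an integer, let c = 1/(1 + (d'−1)^{1/(p−1)}), and let r = ((d'−1)c^p + (1−c)^p)^{1/p}. Then there exist real numbers α > 0 and l > 0 such that |α − c|^p + 2(α + c)^p + (d'−4)c^p + |lα − c|^p < r^p < 3(α + c)^p + (d'−4)c^p + |lα − c|^p. -/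
/-!
Subtracting `(d' - 4) c ^ p` from all three terms, and writing `e = (1 - c) ^ p > 0`, the claim
becomes `|α - c| ^ p + 2 (α + c) ^ p + t < 3 c ^ p + e < 3 (α + c) ^ p + t` with
`t = |l α - c| ^ p`. Choosing `α` with `(α + c) ^ p = c ^ p + e / 3` reduces both inequalities to
`0 < t < (α + c) ^ p - |α - c| ^ p`, and `l` is then chosen so that `l α - c` is a small positive
`p`-th root.
-/

lemma exists_pos_add_pow_eq {p : ℕ} (hp : p ≠ 0) {c A : ℝ} (hc : 0 ≤ c) (hcA : c ^ p < A) :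
    ∃ α : ℝ, 0 < α ∧ (α + c) ^ p = A := by
  have hA : 0 ≤ A := (pow_nonneg hc p).trans hcA.le
  refine ⟨A ^ (p⁻¹ : ℝ) - c, ?_, by rw [sub_add_cancel, Real.rpow_inv_natCast_pow hA hp]⟩
  have := Real.rpow_lt_rpow (pow_nonneg hc p) hcA
    (inv_pos.2 (Nat.cast_pos.2 (Nat.pos_of_ne_zero hp)))
  rw [Real.pow_rpow_inv_natCast hc hp] at this
  linarith

lemma exists_pow_sandwich {p : ℕ} (hp : p ≠ 0) {c e : ℝ} (hc : 0 < c) (he : 0 < e) :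
    ∃ α : ℝ, 0 < α ∧ ∃ l : ℝ, 0 < l ∧
      |α - c| ^ p + 2 * (α + c) ^ p + |l * α - c| ^ p < 3 * c ^ p + e ∧
      3 * c ^ p + e < 3 * (α + c) ^ p + |l * α - c| ^ p := by
  obtain ⟨α, hα, hαc⟩ := exists_pos_add_pow_eq hp hc.le
    (lt_add_of_pos_right (c ^ p) (by positivity : 0 < e / 3))
  have hgap : |α - c| ^ p < (α + c) ^ p :=
    pow_lt_pow_left₀ (abs_lt.2 ⟨by linarith, by linarith⟩) (abs_nonneg _) hp
  obtain ⟨s, hs, hsp⟩ := exists_pos_add_pow_eq hp le_rfl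
    (by rw [zero_pow hp]; linarith : (0 : ℝ) ^ p < ((α + c) ^ p - |α - c| ^ p) / 2)
  rw [add_zero] at hsp
  have hl : (c + s) / α * α - c = s := by field_simp; ring
  refine ⟨α, hα, (c + s) / α, by positivity, ?_⟩
  rw [hl, abs_of_pos hs, hsp]
  constructor <;> linarith

/-- Existence of parameters `α > 0` and `l > 0` satisfying inequality (8) of the
paper: with `c = 1/(1 + (d'-1)^(1/(p-1)))` and `r = ((d'-1) c^p + (1-c)^p)^(1/p)`,
`|α - c|^p + 2(α + c)^p + (d'-4) c^p + |lα - c|^p < r^p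
  < 3(α + c)^p + (d'-4) c^p + |lα - c|^p`. -/
theorem stmt_13 (p : ℕ) (hp : 2 ≤ p) (d' : ℕ) (hd' : 4 ≤ d') :
    let c : ℝ := 1 / (1 + ((d' : ℝ) - 1) ^ ((1 : ℝ) / ((p : ℝ) - 1)))
    let r : ℝ := (((d' : ℝ) - 1) * c ^ p + (1 - c) ^ p) ^ ((1 : ℝ) / p)
    ∃ α : ℝ, 0 < α ∧ ∃ l : ℝ, 0 < l ∧
      (|α - c| ^ p + 2 * (α + c) ^ p + ((d' : ℝ) - 4) * c ^ p + |l * α - c| ^ p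
        < r ^ p) ∧
      (r ^ p
        < 3 * (α + c) ^ p + ((d' : ℝ) - 4) * c ^ p + |l * α - c| ^ p) := by
  intro c r
  have hp0 : p ≠ 0 := by omega
  have hd : (3 : ℝ) ≤ (d' : ℝ) - 1 := by
    have : (4 : ℝ) ≤ d' := by exact_mod_cast hd'
    linarith
  have ht : 0 < ((d' : ℝ) - 1) ^ ((1 : ℝ) / ((p : ℝ) - 1)) :=
    Real.rpow_pos_of_pos (by linarith) _
  have hc0 : 0 < c := by positivity
  have hc1 : c < 1 := (div_lt_one (by linarith)).2 (by linarith)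
  have hrp : r ^ p = ((d' : ℝ) - 4) * c ^ p + (3 * c ^ p + (1 - c) ^ p) := by
    show ((((d' : ℝ) - 1) * c ^ p + (1 - c) ^ p) ^ ((1 : ℝ) / p)) ^ p = _
    rw [one_div, Real.rpow_inv_natCast_pow (by positivity) hp0]
    ring
  obtain ⟨α, hα, l, hl, hlow, hupp⟩ := exists_pow_sandwich hp0 hc0 (pow_pos (sub_pos.2 hc1) p)
  exact ⟨α, hα, l, hl, by rw [hrp]; linarith, by rw [hrp]; linarith⟩
end

section
/- Let p > 1 be a real number and d ≥ 1 an integer, and let a = ((1/d + 1)^p + (d−1)(1/d)^p − 1)^{1/p}. In ℝ^{d+1}, let v_D = −a·e_{d+1} and c_2 = a·e_{d+1}, where e_{d+1} is the (d+1)-th standard basis vector. Then ||c_2 − v_D||_p = 2a, and for every x ∈ ℝ^{d+1} with ||x||_p ≤ d^{(1−p)/p}, it holds that ||x − v_D||_p ≤ a + d^{(1−p)/p} < 2a = ||c_2 − v_D||_p. -/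
/-!
The first claim and the bound `‖x - v_D‖_p ≤ ‖x‖_p + a` are the `l_p` norm of a vector with one
nonzero coordinate and Minkowski's inequality. The strict inequality `d^((1-p)/p) < a` is strict
superadditivity of `t ↦ t^p`: with `t = 1/d`,
`a^p = (t + 1)^p + (d - 1) t^p - 1 > t^p + (d - 1) t^p = d t^p = d^(1-p)`.
-/

open Finset

namespace Real

theorem add_rpow_lt_rpow_add {p x y : ℝ} (hp : 1 < p) (hx : 0 < x) (hy : 0 < y) :
    x ^ p + y ^ p < (x + y) ^ p := by
  have hxy : 0 < x + y := add_pos hx hy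
  have split_pow : ∀ z : ℝ, 0 < z → z ^ p = z * z ^ (p - 1) := fun z hz => by
    rw [← rpow_one_add' hz.le (by linarith), add_sub_cancel]
  have hx' : x ^ (p - 1) < (x + y) ^ (p - 1) := rpow_lt_rpow hx.le (by linarith) (by linarith)
  have hy' : y ^ (p - 1) < (x + y) ^ (p - 1) := rpow_lt_rpow hy.le (by linarith) (by linarith)
  calc x ^ p + y ^ p = x * x ^ (p - 1) + y * y ^ (p - 1) := by rw [split_pow x hx, split_pow y hy]
    _ < x * (x + y) ^ (p - 1) + y * (x + y) ^ (p - 1) := by gcongr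
    _ = (x + y) ^ p := by rw [split_pow _ hxy]; ring

end Real

section LpNorm

variable {ι : Type*} [Fintype ι]

noncomputable def lpNorm (p : ℝ) (x : ι → ℝ) : ℝ :=
  (∑ i, |x i| ^ p) ^ (1 / p)

theorem lpNorm_sub_le {p : ℝ} (hp : 1 ≤ p) (x y : ι → ℝ) :
    lpNorm p (x - y) ≤ lpNorm p x + lpNorm p y := by
  simpa [lpNorm, sub_eq_add_neg] using Real.Lp_add_le univ x (-y) hp

theorem lpNorm_eq_abs_of_eq_zero {p : ℝ} (hp : 0 < p) {x : ι → ℝ} (j : ι)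
    (hx : ∀ i, i ≠ j → x i = 0) : lpNorm p x = |x j| := by
  rw [lpNorm, sum_eq_single j (fun i _ hi => by simp [hx i hi, Real.zero_rpow hp.ne'])
    (by simp), one_div, Real.rpow_rpow_inv (abs_nonneg _) hp.ne']

end LpNorm

noncomputable def dummyVoterRadius (p d : ℝ) : ℝ :=
  ((1 / d + 1) ^ p + (d - 1) * (1 / d) ^ p - 1) ^ (1 / p)

theorem rpow_one_sub_div_lt_dummyVoterRadius {p : ℝ} (hp : 1 < p) {d : ℝ} (hd : 1 ≤ d) :
    d ^ ((1 - p) / p) < dummyVoterRadius p d := by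
  have hd0 : 0 < d := by linarith
  have ht : 0 < (1 / d) ^ p := by positivity
  have hsuper := Real.add_rpow_lt_rpow_add hp (one_div_pos.2 hd0) one_pos
  rw [Real.one_rpow] at hsuper
  have hdt : d ^ (1 - p) = d * (1 / d) ^ p := by
    rw [Real.rpow_sub hd0, Real.rpow_one, one_div, Real.inv_rpow hd0.le, div_eq_mul_inv]
  have hlt : d ^ (1 - p) < (1 / d + 1) ^ p + (d - 1) * (1 / d) ^ p - 1 := by
    rw [hdt]; nlinarith
  calc d ^ ((1 - p) / p) = (d ^ (1 - p)) ^ (1 / p) := by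
        rw [← Real.rpow_mul hd0.le, mul_one_div]
    _ < _ := Real.rpow_lt_rpow (by positivity) hlt (by positivity)

/-- Dummy-voter gadget for the 3-SAT reduction under the `l_p` norm.  Let `p > 1` be
real, `d ≥ 1`, and `a = ((1/d + 1)^p + (d-1)(1/d)^p - 1)^(1/p)`.  In `ℝ^{d+1}`, let
`v_D = -a e_{d+1}` and `c₂ = a e_{d+1}`.  Then `‖c₂ - v_D‖_p = 2a`, and every `x` with
`‖x‖_p ≤ d^((1-p)/p)` satisfies `‖x - v_D‖_p ≤ a + d^((1-p)/p) < 2a = ‖c₂ - v_D‖_p`. -/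
theorem stmt_16 (p : ℝ) (hp : 1 < p) (d : ℕ) (hd : 1 ≤ d) :
    let a : ℝ :=
      ((1 / (d : ℝ) + 1) ^ p + ((d : ℝ) - 1) * (1 / (d : ℝ)) ^ p - 1) ^ ((1 : ℝ) / p)
    let vD : Fin (d + 1) → ℝ := fun j => if (j : ℕ) = d then -a else 0
    let c₂ : Fin (d + 1) → ℝ := fun j => if (j : ℕ) = d then a else 0
    (∑ i : Fin (d + 1), |c₂ i - vD i| ^ p) ^ ((1 : ℝ) / p) = 2 * a ∧
    ∀ x : Fin (d + 1) → ℝ,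
      (∑ i : Fin (d + 1), |x i| ^ p) ^ ((1 : ℝ) / p) ≤ (d : ℝ) ^ ((1 - p) / p) →
      (∑ i : Fin (d + 1), |x i - vD i| ^ p) ^ ((1 : ℝ) / p)
          ≤ a + (d : ℝ) ^ ((1 - p) / p) ∧
        a + (d : ℝ) ^ ((1 - p) / p) < 2 * a := by
  intro a vD c₂
  have hp0 : 0 < p := by linarith
  have ha : (d : ℝ) ^ ((1 - p) / p) < a :=
    rpow_one_sub_div_lt_dummyVoterRadius hp (by exact_mod_cast hd)
  have ha0 : 0 < a := lt_of_le_of_lt (by positivity) ha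
  have off_last : ∀ i : Fin (d + 1), i ≠ Fin.last d → (i : ℕ) ≠ d := fun i hi h =>
    hi (Fin.ext h)
  have hvD : lpNorm p vD = a := by
    rw [lpNorm_eq_abs_of_eq_zero hp0 (Fin.last d) fun i hi => if_neg (off_last i hi)]
    simp [ha0.le]
  refine ⟨?_, fun x hx => ⟨?_, by linarith⟩⟩
  · change lpNorm p (c₂ - vD) = 2 * a
    rw [lpNorm_eq_abs_of_eq_zero hp0 (Fin.last d) fun i hi => by simp [c₂, vD, off_last i hi]]
    simp [c₂, vD, ← two_mul, ha0.le]
  · change lpNorm p (x - vD) ≤ a + (d : ℝ) ^ ((1 - p) / p)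
    linarith [lpNorm_sub_le hp.le x vD, show lpNorm p x ≤ _ from hx]
end
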